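/- In the positive singular braid monoid SBKLₙ⁺ the fundamental element δ satisfies the following commutation formulae: a_{ts}δ = δa_{(t+1)(s+1)} for 1 ≤ s < t < n; a_{ns}δ = δa_{(s+1)1} for 1 ≤ s < n; b_{ts}δ = δb_{(t+1)(s+1)} for 1 ≤ s < t < n; and b_{ns}δ = δb_{(s+1)1} for 1 ≤ s < n. -/

import Mathlib

/-!
STATEMENT 11: In the positive singular braid monoid SBKLₙ⁺ the fundamental
element δ satisfies: a_{ts}δ = δa_{(t+1)(s+1)} for 1 ≤ s < t < n;
a_{ns}δ = δa_{(s+1)1} for 1 ≤ s < n; b_{ts}δ = δb_{(t+1)(s+1)} for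
1 ≤ s < t < n; and b_{ns}δ = δb_{(s+1)1} for 1 ≤ s < n.
-/
open FreeMonoid

/-- Index pairs `(t, s)` with `1 ≤ s < t ≤ n`. -/
def SPair (n : ℕ) : Type := {p : ℕ × ℕ // 1 ≤ p.2 ∧ p.2 < p.1 ∧ p.1 ≤ n}

/-- The Birman–Ko–Lee generators of the positive singular braid monoid:
`a_{ts}` and `b_{ts}` for `1 ≤ s < t ≤ n`. -/
inductive PGen (n : ℕ) : Type
  | a (p : SPair n) : PGen n
  | b (p : SPair n) : PGen n

/-- `a_{ts}` as an element of the free monoid on the generators (the unit if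
the indices are invalid). -/
def ag (n t s : ℕ) : FreeMonoid (PGen n) :=
  if h : 1 ≤ s ∧ s < t ∧ t ≤ n then of (PGen.a ⟨(t, s), h⟩) else 1

/-- `b_{ts}` as an element of the free monoid on the generators. -/
def bg (n t s : ℕ) : FreeMonoid (PGen n) :=
  if h : 1 ≤ s ∧ s < t ∧ t ≤ n then of (PGen.b ⟨(t, s), h⟩) else 1

/-- The defining relations of the positive singular braid monoid `SBKLₙ⁺`. -/
inductive posRel (n : ℕ) : FreeMonoid (PGen n) → FreeMonoid (PGen n) → Prop
  | comm_aa (t s r q : ℕ) (h₁ : 1 ≤ s ∧ s < t ∧ t ≤ n) (h₂ : 1 ≤ q ∧ q < r ∧ r ≤ n)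
      (h : 0 < ((t : ℤ) - r) * ((t : ℤ) - q) * ((s : ℤ) - r) * ((s : ℤ) - q)) :
      posRel n (ag n t s * ag n r q) (ag n r q * ag n t s)
  | band₁ (t s r : ℕ) (h₁ : 1 ≤ r) (h₂ : r < s) (h₃ : s < t) (h₄ : t ≤ n) :
      posRel n (ag n t s * ag n s r) (ag n t r * ag n t s)
  | band₂ (t s r : ℕ) (h₁ : 1 ≤ r) (h₂ : r < s) (h₃ : s < t) (h₄ : t ≤ n) :
      posRel n (ag n t r * ag n t s) (ag n s r * ag n t r)
  | comm_ab (t s r q : ℕ) (h₁ : 1 ≤ s ∧ s < t ∧ t ≤ n) (h₂ : 1 ≤ q ∧ q < r ∧ r ≤ n)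
      (h : 0 < ((t : ℤ) - r) * ((t : ℤ) - q) * ((s : ℤ) - r) * ((s : ℤ) - q)) :
      posRel n (ag n t s * bg n r q) (bg n r q * ag n t s)
  | comm_ab' (t s : ℕ) (h : 1 ≤ s ∧ s < t ∧ t ≤ n) :
      posRel n (ag n t s * bg n t s) (bg n t s * ag n t s)
  | mixed₁ (t s r : ℕ) (h₁ : 1 ≤ r) (h₂ : r < s) (h₃ : s < t) (h₄ : t ≤ n) :
      posRel n (ag n t s * bg n s r) (bg n t r * ag n t s)
  | mixed₂ (t s r : ℕ) (h₁ : 1 ≤ r) (h₂ : r < s) (h₃ : s < t) (h₄ : t ≤ n) :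
      posRel n (ag n s r * bg n t r) (bg n t s * ag n s r)
  | mixed₃ (t s r : ℕ) (h₁ : 1 ≤ r) (h₂ : r < s) (h₃ : s < t) (h₄ : t ≤ n) :
      posRel n (ag n t r * bg n t s) (bg n s r * ag n t r)
  | comm_bb (t s r q : ℕ) (h₁ : 1 ≤ s ∧ s < t ∧ t ≤ n) (h₂ : 1 ≤ q ∧ q < r ∧ r ≤ n)
      (h : 0 < ((t : ℤ) - r) * ((t : ℤ) - q) * ((s : ℤ) - r) * ((s : ℤ) - q)) :
      posRel n (bg n t s * bg n r q) (bg n r q * bg n t s)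

/-- The positive singular braid monoid `SBKLₙ⁺`. -/
def PosSBKL (n : ℕ) : Type := PresentedMonoid (posRel n)

instance (n : ℕ) : Monoid (PosSBKL n) :=
  inferInstanceAs (Monoid (PresentedMonoid (posRel n)))

/-- The descending chain `a_{hi,hi-1} a_{hi-1,hi-2} ⋯` of length `len`, as a
word in the free monoid on the generators. -/
def aChain (n hi len : ℕ) : FreeMonoid (PGen n) :=
  ((List.range len).map (fun j => ag n (hi - j) (hi - j - 1))).prod

/-- The fundamental word `δ = a_{n(n−1)}a_{(n−1)(n−2)}⋯a_{21}`. -/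
def deltaWord (n : ℕ) : FreeMonoid (PGen n) := aChain n n (n - 1)

/-- The canonical projection from the free monoid to `SBKLₙ⁺`. -/
def wordM (n : ℕ) (w : FreeMonoid (PGen n)) : PosSBKL n :=
  PresentedMonoid.mk (posRel n) w

/-- `a_{ts}` as an element of `SBKLₙ⁺`. -/
def aM (n t s : ℕ) : PosSBKL n := wordM n (ag n t s)

/-- `b_{ts}` as an element of `SBKLₙ⁺`. -/
def bM (n t s : ℕ) : PosSBKL n := wordM n (bg n t s)

/-- The fundamental element `δ` of `SBKLₙ⁺`. -/
def deltaM (n : ℕ) : PosSBKL n := wordM n (deltaWord n)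

/-!
Write `C(t, m) = a_{t(t-1)} ⋯ a_{(m+1)m}`, so that `δ = C(n, 1)`. Conjugation by `C(t, m)`
rotates the points `m, …, t` cyclically, and this can be seen one relation at a time: by the
band relations `a_{ts}a_{sr} = a_{tr}a_{ts} = a_{sr}a_{tr}`, pushing a generator through an
`a`-generator changes one of its endpoints, and the mixed relations say the same for
`b`-generators, so one argument serves both families `x = a` and `x = b`. For `s < t < n`
split `δ = C(n, t+1) C(t+1, s) C(s, 1)`: the outer factors commute with `x_{ts}`, resp.
`x_{(t+1)(s+1)}`, and `C(t+1, s) = a_{(t+1)s} C(t+1, s+1)` carries `x_{(t+1)(s+1)}` first to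
`x_{(t+1)t}` and then to `x_{ts}`.
-/

lemma wordM_eq_of_posRel {n : ℕ} {u v : FreeMonoid (PGen n)} (h : posRel n u v) :
    wordM n u = wordM n v :=
  PresentedMonoid.mk_eq_mk_of_rel h

/-- The relations along which `a`-generators move past the family `x`: the band relations give
them for `x = a`, the mixed relations for `x = b`. -/
structure IsBandFamily (n : ℕ) (x : ℕ → ℕ → PosSBKL n) : Prop where
  commute (t s r q : ℕ) (h₁ : 1 ≤ s ∧ s < t ∧ t ≤ n) (h₂ : 1 ≤ q ∧ q < r ∧ r ≤ n)
    (h : 0 < ((t : ℤ) - r) * ((t : ℤ) - q) * ((s : ℤ) - r) * ((s : ℤ) - q)) :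
    Commute (aM n t s) (x r q)
  commute_self (t s : ℕ) (h : 1 ≤ s ∧ s < t ∧ t ≤ n) : Commute (aM n t s) (x t s)
  semiconjBy_upper (t s r : ℕ) (h₁ : 1 ≤ r) (h₂ : r < s) (h₃ : s < t) (h₄ : t ≤ n) :
    SemiconjBy (aM n t s) (x s r) (x t r)
  semiconjBy_lower (t s r : ℕ) (h₁ : 1 ≤ r) (h₂ : r < s) (h₃ : s < t) (h₄ : t ≤ n) :
    SemiconjBy (aM n s r) (x t r) (x t s)
  semiconjBy_outer (t s r : ℕ) (h₁ : 1 ≤ r) (h₂ : r < s) (h₃ : s < t) (h₄ : t ≤ n) :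
    SemiconjBy (aM n t r) (x t s) (x s r)

lemma isBandFamily_aM (n : ℕ) : IsBandFamily n (aM n) where
  commute t s r q h₁ h₂ h := wordM_eq_of_posRel (posRel.comm_aa t s r q h₁ h₂ h)
  commute_self _ _ _ := Commute.refl _
  semiconjBy_upper t s r h₁ h₂ h₃ h₄ := wordM_eq_of_posRel (posRel.band₁ t s r h₁ h₂ h₃ h₄)
  semiconjBy_lower t s r h₁ h₂ h₃ h₄ :=
    (wordM_eq_of_posRel (posRel.band₂ t s r h₁ h₂ h₃ h₄)).symm.trans
      (wordM_eq_of_posRel (posRel.band₁ t s r h₁ h₂ h₃ h₄)).symm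
  semiconjBy_outer t s r h₁ h₂ h₃ h₄ := wordM_eq_of_posRel (posRel.band₂ t s r h₁ h₂ h₃ h₄)

lemma isBandFamily_bM (n : ℕ) : IsBandFamily n (bM n) where
  commute t s r q h₁ h₂ h := wordM_eq_of_posRel (posRel.comm_ab t s r q h₁ h₂ h)
  commute_self t s h := wordM_eq_of_posRel (posRel.comm_ab' t s h)
  semiconjBy_upper t s r h₁ h₂ h₃ h₄ := wordM_eq_of_posRel (posRel.mixed₁ t s r h₁ h₂ h₃ h₄)
  semiconjBy_lower t s r h₁ h₂ h₃ h₄ := wordM_eq_of_posRel (posRel.mixed₂ t s r h₁ h₂ h₃ h₄)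
  semiconjBy_outer t s r h₁ h₂ h₃ h₄ := wordM_eq_of_posRel (posRel.mixed₃ t s r h₁ h₂ h₃ h₄)

lemma aChain_add (n hi a b : ℕ) :
    aChain n hi (a + b) = aChain n hi a * aChain n (hi - a) b := by
  simp only [aChain, List.range_add, List.map_append, List.prod_append, List.map_map]
  congr 3
  ext j
  simp only [Function.comp_apply, Nat.sub_add_eq]

/-- `chain n t m = a_{t(t-1)} a_{(t-1)(t-2)} ⋯ a_{(m+1)m}` for `m ≤ t`. -/
def chain (n t m : ℕ) : PosSBKL n := wordM n (aChain n t (t - m))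

lemma deltaM_eq_chain (n : ℕ) : deltaM n = chain n n 1 := rfl

lemma chain_self (n t : ℕ) : chain n t t = 1 := by
  simp only [chain, Nat.sub_self]
  rfl

lemma chain_succ_self (n t : ℕ) : chain n (t + 1) t = aM n (t + 1) t := by
  simp [chain, aChain, aM]

lemma chain_trans {n q m t : ℕ} (hqm : q ≤ m) (hmt : m ≤ t) :
    chain n t q = chain n t m * chain n m q := by
  simp only [chain]
  rw [show t - q = (t - m) + (m - q) by omega, aChain_add, show t - (t - m) = m by omega]
  rfl

lemma chain_succ {n m t : ℕ} (h : m ≤ t) : chain n (t + 1) m = aM n (t + 1) t * chain n t m := by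
  rw [chain_trans h t.le_succ, chain_succ_self]

lemma chain_eq_mul_aM {n m t : ℕ} (h : m < t) :
    chain n t m = chain n t (m + 1) * aM n (m + 1) m := by
  rw [chain_trans m.le_succ h, chain_succ_self]

lemma commute_chain {n m t : ℕ} {y : PosSBKL n} (hmt : m ≤ t)
    (h : ∀ k, m ≤ k → k < t → Commute (aM n (k + 1) k) y) : Commute (chain n t m) y := by
  induction t, hmt using Nat.le_induction with
  | base => simpa only [chain_self] using Commute.one_left y
  | succ t hmt ih =>
    rw [chain_succ hmt]
    exact (h t hmt t.lt_succ_self).mul_left (ih fun k hk hkt => h k hk (by omega))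

section BandFamily

variable {n : ℕ} {x : ℕ → ℕ → PosSBKL n}

lemma IsBandFamily.commute_chain_of_disjoint (hx : IsBandFamily n x) {T S m t : ℕ}
    (hS : 1 ≤ S) (hST : S < T) (hTn : T ≤ n) (hm : 1 ≤ m) (hmt : m ≤ t) (htn : t ≤ n)
    (hdisj : T < m ∨ t < S) : Commute (chain n t m) (x T S) := by
  refine commute_chain hmt fun k hmk hkt => hx.commute (k + 1) k T S (by omega) (by omega) ?_
  have hpos : 0 < ((k : ℤ) + 1 - T) * ((k : ℤ) + 1 - S) ∧ 0 < ((k : ℤ) - T) * ((k : ℤ) - S) := by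
    rcases hdisj with h | h
    · exact ⟨mul_pos (by omega) (by omega), mul_pos (by omega) (by omega)⟩
    · exact ⟨mul_pos_of_neg_of_neg (by omega) (by omega),
        mul_pos_of_neg_of_neg (by omega) (by omega)⟩
  push_cast
  linarith [mul_pos hpos.1 hpos.2]

lemma IsBandFamily.semiconjBy_chain_below (hx : IsBandFamily n x) {s m t : ℕ}
    (hs : 1 ≤ s) (hsm : s < m) (hmt : m ≤ t) (htn : t ≤ n) :
    SemiconjBy (chain n t m) (x m s) (x t s) := by
  induction t, hmt using Nat.le_induction with
  | base => simpa only [chain_self] using SemiconjBy.one_left (x m s)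
  | succ t hmt ih =>
    rw [chain_succ hmt]
    exact (hx.semiconjBy_upper (t + 1) t s hs (by omega) t.lt_succ_self htn).mul_left
      (ih (by omega))

lemma IsBandFamily.semiconjBy_chain_above (hx : IsBandFamily n x) {q m T : ℕ}
    (hq : 1 ≤ q) (hqm : q ≤ m) (hmT : m < T) (hTn : T ≤ n) :
    SemiconjBy (chain n m q) (x T q) (x T m) := by
  induction m, hqm using Nat.le_induction with
  | base => simpa only [chain_self] using SemiconjBy.one_left (x T q)
  | succ m hqm ih =>
    rw [chain_succ hqm]
    exact (hx.semiconjBy_lower T (m + 1) m (by omega) m.lt_succ_self hmT hTn).mul_left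
      (ih (by omega))

lemma IsBandFamily.semiconjBy_chain_succ (hx : IsBandFamily n x) {m t : ℕ}
    (hm : 1 ≤ m) (hmt : m ≤ t) (htn : t < n) :
    SemiconjBy (chain n (t + 1) m) (x (t + 1) m) (x (t + 1) t) := by
  rw [chain_succ hmt]
  exact SemiconjBy.mul_left (hx.commute_self (t + 1) t (by omega))
    (hx.semiconjBy_chain_above hm hmt t.lt_succ_self htn)

lemma IsBandFamily.semiconjBy_chain_top (hx : IsBandFamily n x) {m u T : ℕ}
    (hm : 1 ≤ m) (hmu : m ≤ u) (huT : u < T) (hTn : T ≤ n) :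
    SemiconjBy (chain n T m) (x (u + 1) m) (x T u) := by
  rw [chain_trans (by omega : m ≤ u + 1) huT]
  exact (hx.semiconjBy_chain_below (by omega) u.lt_succ_self huT hTn).mul_left
    (hx.semiconjBy_chain_succ hm hmu (by omega))

lemma chain_eq_aM_mul {s t : ℕ} (hs : 1 ≤ s) (hst : s < t) (htn : t ≤ n) :
    chain n t s = aM n t s * chain n t (s + 1) := by
  rw [chain_eq_mul_aM hst]
  exact (isBandFamily_aM n).semiconjBy_chain_below hs s.lt_succ_self hst htn

lemma IsBandFamily.semiconjBy_chain_bot (hx : IsBandFamily n x) {s t : ℕ}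
    (hs : 1 ≤ s) (hst : s < t) (htn : t < n) :
    SemiconjBy (chain n (t + 1) s) (x (t + 1) (s + 1)) (x t s) := by
  rw [chain_eq_aM_mul hs (by omega) htn]
  exact (hx.semiconjBy_outer (t + 1) t s hs hst t.lt_succ_self htn).mul_left
    (hx.semiconjBy_chain_succ (by omega) hst htn)

lemma IsBandFamily.semiconjBy_delta (hx : IsBandFamily n x) {s t : ℕ}
    (hs : 1 ≤ s) (hst : s < t) (htn : t < n) :
    SemiconjBy (deltaM n) (x (t + 1) (s + 1)) (x t s) := by
  rw [deltaM_eq_chain, chain_trans (by omega : 1 ≤ t + 1) htn,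
    chain_trans hs (by omega : s ≤ t + 1)]
  exact SemiconjBy.mul_left
    (hx.commute_chain_of_disjoint hs hst htn.le (by omega) htn le_rfl (Or.inl t.lt_succ_self))
    ((hx.semiconjBy_chain_bot hs hst htn).mul_left
      (hx.commute_chain_of_disjoint (by omega) (by omega) htn le_rfl hs (by omega)
        (Or.inr s.lt_succ_self)))

lemma IsBandFamily.semiconjBy_delta_top (hx : IsBandFamily n x) {s : ℕ}
    (hs : 1 ≤ s) (hsn : s < n) :
    SemiconjBy (deltaM n) (x (s + 1) 1) (x n s) :=
  hx.semiconjBy_chain_top le_rfl hs hsn le_rfl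

end BandFamily

theorem delta_commutation (n : ℕ) :
    (∀ t s : ℕ, 1 ≤ s → s < t → t < n →
      aM n t s * deltaM n = deltaM n * aM n (t + 1) (s + 1)) ∧
    (∀ s : ℕ, 1 ≤ s → s < n →
      aM n n s * deltaM n = deltaM n * aM n (s + 1) 1) ∧
    (∀ t s : ℕ, 1 ≤ s → s < t → t < n →
      bM n t s * deltaM n = deltaM n * bM n (t + 1) (s + 1)) ∧
    (∀ s : ℕ, 1 ≤ s → s < n →
      bM n n s * deltaM n = deltaM n * bM n (s + 1) 1) :=
  ⟨fun _ _ hs hst htn => ((isBandFamily_aM n).semiconjBy_delta hs hst htn).eq.symm,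
    fun _ hs hsn => ((isBandFamily_aM n).semiconjBy_delta_top hs hsn).eq.symm,
    fun _ _ hs hst htn => ((isBandFamily_bM n).semiconjBy_delta hs hst htn).eq.symm,
    fun _ hs hsn => ((isBandFamily_bM n).semiconjBy_delta_top hs hsn).eq.symm⟩
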